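/- arXiv:2508.09052 — 3 statements merged into one kernel-verified Lean document; each statement's English description precedes it below -/
import Mathlib

section
/- Let A be a unital complex Banach algebra, X a complex vector space, z ∈ A, and V : A × A → X a symmetric bilinear map with the Jordan product property at z (i.e., a∘b = a'∘b' = z implies V(a,b) = V(a',b'), where x∘y = xy+yx). If a, b ∈ A satisfy a² = b² = 1, then V(a,a) = V(b,b). -/
/-!
Put `p_c = n c + y` and `q_c = n c - y` for a scalar `n ≠ 0`. Since
`(x + y) ∘ (x - y) = 2x² - 2y²`, if `c² = 1` then `p_c ∘ q_c = 2n² - 2y²` does not depend on `c`,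
and it equals `z` as soon as `y² = n² - z/2`. Such a square root exists once `n² > ‖z‖/2`: after
scaling, `1 - w` with `‖w‖ < 1` is the square of `1 - t`, where `t` is the fixed point of the
contraction `t ↦ (t² + w)/2` on the ball of radius `‖w‖`. Then `V(p_a, q_a) = V(p_b, q_b)`, and
by symmetry `V(p_c, q_c) = n² V(c, c) - V(y, y)`; cancel `n²`.
-/

open Metric Set

section SquareRoot

variable {A : Type*} [NormedRing A]

/-- `t` is a fixed point iff `(1 - t)² = 1 - w`. -/
noncomputable def sqrtContraction (𝕜 : Type*) [RCLike 𝕜] [NormedAlgebra 𝕜 A] (w t : A) : A :=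
  (2 : 𝕜)⁻¹ • (t * t + w)

variable {𝕜 : Type*} [RCLike 𝕜] [NormedAlgebra 𝕜 A]

theorem mapsTo_sqrtContraction_closedBall {w : A} (hw : ‖w‖ ≤ 1) :
    MapsTo (sqrtContraction 𝕜 w) (closedBall 0 ‖w‖) (closedBall 0 ‖w‖) := by
  intro t ht
  rw [mem_closedBall_zero_iff] at ht ⊢
  calc ‖sqrtContraction 𝕜 w t‖ = 2⁻¹ * ‖t * t + w‖ := by
        rw [sqrtContraction, norm_smul, norm_inv, RCLike.norm_ofNat]
    _ ≤ 2⁻¹ * (‖t‖ * ‖t‖ + ‖w‖) := by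
        gcongr
        exact (norm_add_le _ _).trans (add_le_add_left (norm_mul_le _ _) _)
    _ ≤ ‖w‖ := by nlinarith [norm_nonneg t]

theorem lipschitzOnWith_sqrtContraction_closedBall (w : A) :
    LipschitzOnWith ‖w‖₊ (sqrtContraction 𝕜 w) (closedBall 0 ‖w‖) := by
  refine LipschitzOnWith.of_dist_le_mul fun t ht s hs => ?_
  rw [mem_closedBall_zero_iff] at ht hs
  have hdiff : sqrtContraction 𝕜 w t - sqrtContraction 𝕜 w s
      = (2 : 𝕜)⁻¹ • (t * (t - s) + (t - s) * s) := by
    rw [sqrtContraction, sqrtContraction, ← smul_sub]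
    noncomm_ring
  calc dist (sqrtContraction 𝕜 w t) (sqrtContraction 𝕜 w s)
      = 2⁻¹ * ‖t * (t - s) + (t - s) * s‖ := by
        rw [dist_eq_norm, hdiff, norm_smul, norm_inv, RCLike.norm_ofNat]
    _ ≤ 2⁻¹ * (‖t‖ * ‖t - s‖ + ‖t - s‖ * ‖s‖) := by
        gcongr
        exact (norm_add_le _ _).trans (add_le_add (norm_mul_le _ _) (norm_mul_le _ _))
    _ ≤ ‖w‖₊ * dist t s := by
        rw [coe_nnnorm, dist_eq_norm]
        nlinarith [norm_nonneg (t - s)]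

theorem exists_mul_self_eq_one_sub (𝕜 : Type*) [RCLike 𝕜] [NormedAlgebra 𝕜 A] [CompleteSpace A]
    {w : A} (hw : ‖w‖ < 1) : ∃ y : A, y * y = 1 - w := by
  have hmaps := mapsTo_sqrtContraction_closedBall (𝕜 := 𝕜) hw.le
  have hcontr : ContractingWith ‖w‖₊ (hmaps.restrict _ _ _) :=
    ⟨hw, (hmaps.lipschitzOnWith_iff_restrict).mp (lipschitzOnWith_sqrtContraction_closedBall w)⟩
  obtain ⟨t, -, hfix, -⟩ := ContractingWith.exists_fixedPoint' isClosed_closedBall.isComplete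
    hmaps hcontr (mem_closedBall_self (norm_nonneg w)) (edist_ne_top _ _)
  have htwo : (2 : 𝕜) • t = t * t + w := by
    nth_rw 1 [← hfix.eq]
    exact smul_inv_smul₀ (two_ne_zero' 𝕜) _
  refine ⟨1 - t, ?_⟩
  calc (1 - t) * (1 - t) = 1 - (2 : 𝕜) • t + t * t := by rw [two_smul]; noncomm_ring
    _ = 1 - w := by rw [htwo]; abel

theorem exists_mul_self_eq_algebraMap_sub (𝕜 : Type*) [RCLike 𝕜] [NormedAlgebra 𝕜 A]
    [CompleteSpace A] (z : A) : ∃ c : 𝕜, c ≠ 0 ∧ ∃ y : A, y * y = algebraMap 𝕜 A (c ^ 2) - z := by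
  set r : ℝ := ‖z‖ + 1
  have hr : 0 < r := by positivity
  have hc : (r : 𝕜) ≠ 0 := RCLike.ofReal_ne_zero.2 hr.ne'
  have hw : ‖((r : 𝕜) ^ 2)⁻¹ • z‖ < 1 := by
    rw [norm_smul, norm_inv, norm_pow, RCLike.norm_ofReal, abs_of_pos hr,
      inv_mul_lt_iff₀ (by positivity), mul_one]
    nlinarith [norm_nonneg z]
  obtain ⟨y, hy⟩ := exists_mul_self_eq_one_sub 𝕜 hw
  refine ⟨r, hc, (r : 𝕜) • y, ?_⟩
  rw [smul_mul_smul_comm, ← sq, hy, smul_sub, smul_smul, mul_inv_cancel₀ (pow_ne_zero 2 hc),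
    one_smul, Algebra.algebraMap_eq_smul_one]

end SquareRoot

theorem add_mul_sub_add_sub_mul_add {R : Type*} [Ring R] (x y : R) :
    (x + y) * (x - y) + (x - y) * (x + y) = 2 * (x * x - y * y) := by
  noncomm_ring

theorem LinearMap.apply_add_sub_of_symm {R M N : Type*} [CommRing R] [AddCommGroup M] [Module R M]
    [AddCommGroup N] [Module R N] {V : M →ₗ[R] M →ₗ[R] N} (hV : ∀ x y, V x y = V y x) (x y : M) :
    V (x + y) (x - y) = V x x - V y y := by
  simp only [map_add, map_sub, LinearMap.add_apply]
  rw [hV y x]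
  abel

theorem stmt_4 {A X : Type*} [NormedRing A] [NormedAlgebra ℂ A] [CompleteSpace A]
    [AddCommGroup X] [Module ℂ X]
    (V : A →ₗ[ℂ] A →ₗ[ℂ] X) (z : A)
    (hsymm : ∀ a b : A, V a b = V b a)
    (hJ : ∀ a b a' b' : A, a * b + b * a = z → a' * b' + b' * a' = z →
      V a b = V a' b')
    (a b : A) (ha : a ^ 2 = 1) (hb : b ^ 2 = 1) :
    V a a = V b b := by
  obtain ⟨n, hn, y, hy⟩ := exists_mul_self_eq_algebraMap_sub ℂ ((2 : ℂ)⁻¹ • z)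
  have hjordan : ∀ c : A, c ^ 2 = 1 →
      (n • c + y) * (n • c - y) + (n • c - y) * (n • c + y) = z := by
    intro c hc
    rw [add_mul_sub_add_sub_mul_add, smul_mul_smul_comm, ← sq, ← sq c, hc, hy,
      Algebra.algebraMap_eq_smul_one, sub_sub_cancel, mul_smul_comm, two_mul, ← two_smul ℂ,
      smul_smul, inv_mul_cancel₀ (two_ne_zero' ℂ), one_smul]
  have hV : ∀ c : A, V (n • c + y) (n • c - y) = n ^ 2 • V c c - V y y := fun c => by
    simp only [LinearMap.apply_add_sub_of_symm hsymm, map_smul, LinearMap.smul_apply, smul_smul, sq]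
  have key := hJ _ _ _ _ (hjordan a ha) (hjordan b hb)
  rw [hV, hV, sub_left_inj] at key
  exact smul_right_injective X (pow_ne_zero 2 hn) key
end

section
/- Let A be a unital algebra over a field of characteristic ≠ 2, X a vector space, and V : A × A → X a symmetric bilinear map such that V(a,a) = V(b,b) whenever a² = b² = 1. Suppose a ∈ A satisfies a² = 0 and there is an idempotent p ∈ A with pa = a and ap = 0. Then V(a,a) = 0. -/
/-! With `u = 2p - 1` one has `u² = 1` and `ua + au = 0`, so `(u ± a)² = 1` when `a² = 0`.
Hence `V(u + a, u + a) = V(u - a, u - a) = V(u, u)`, and the parallelogram identity for the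
bilinear map `V` turns the sum of these two equalities into `2 V(a, a) = 0`. -/

theorem IsIdempotentElem.two_mul_sub_one_sq {R : Type*} [Ring R] {p : R}
    (hp : IsIdempotentElem p) : (2 * p - 1) ^ 2 = 1 := by
  have hpp : p * p = p := hp
  calc (2 * p - 1) ^ 2 = 4 * (p * p) - 4 * p + 1 := by noncomm_ring
    _ = 1 := by rw [hpp]; noncomm_ring

theorem add_sq_eq_one_of_anticomm {R : Type*} [Ring R] {u a : R} (hu : u ^ 2 = 1)
    (hanti : u * a + a * u = 0) (ha : a ^ 2 = 0) : (u + a) ^ 2 = 1 := by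
  calc (u + a) ^ 2 = u ^ 2 + (u * a + a * u) + a ^ 2 := by noncomm_ring
    _ = 1 := by rw [hu, hanti, ha]; abel

theorem sub_sq_eq_one_of_anticomm {R : Type*} [Ring R] {u a : R} (hu : u ^ 2 = 1)
    (hanti : u * a + a * u = 0) (ha : a ^ 2 = 0) : (u - a) ^ 2 = 1 := by
  rw [sub_eq_add_neg]
  exact add_sq_eq_one_of_anticomm hu (by rw [mul_neg, neg_mul, ← neg_add, hanti, neg_zero])
    (by rw [neg_sq, ha])

theorem two_mul_sub_one_mul_add_mul_two_mul_sub_one {R : Type*} [Ring R] {p a : R}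
    (hpa : p * a = a) (hap : a * p = 0) : (2 * p - 1) * a + a * (2 * p - 1) = 0 := by
  calc (2 * p - 1) * a + a * (2 * p - 1) = 2 * (p * a) - a + (2 * (a * p) - a) := by
        noncomm_ring
    _ = 0 := by rw [hpa, hap]; noncomm_ring

theorem LinearMap.apply_add_add_apply_sub {R M N : Type*} [CommRing R] [AddCommGroup M]
    [AddCommGroup N] [Module R M] [Module R N] (B : M →ₗ[R] M →ₗ[R] N) (x y : M) :
    B (x + y) (x + y) + B (x - y) (x - y) = (2 : R) • (B x x + B y y) := by
  simp only [map_add, map_sub, LinearMap.add_apply, LinearMap.sub_apply, two_smul]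
  abel

theorem stmt_5_general {K A X : Type*} [Field K] (h2 : (2 : K) ≠ 0)
    [Ring A] [Algebra K A] [AddCommGroup X] [Module K X]
    (V : A →ₗ[K] A →ₗ[K] X)
    (hsq1 : ∀ a b : A, a ^ 2 = 1 → b ^ 2 = 1 → V a a = V b b)
    (a p : A) (ha : a ^ 2 = 0) (hp : p * p = p)
    (hpa : p * a = a) (hap : a * p = 0) :
    V a a = 0 := by
  set u : A := 2 * p - 1
  have hu : u ^ 2 = 1 := IsIdempotentElem.two_mul_sub_one_sq hp
  have hanti : u * a + a * u = 0 := two_mul_sub_one_mul_add_mul_two_mul_sub_one hpa hap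
  have hplus := hsq1 _ _ (add_sq_eq_one_of_anticomm hu hanti ha) hu
  have hminus := hsq1 _ _ (sub_sq_eq_one_of_anticomm hu hanti ha) hu
  have htwo : (2 : K) • V a a = 0 := by
    have h := V.apply_add_add_apply_sub u a
    rw [hplus, hminus, smul_add, ← two_smul K (V u u)] at h
    exact left_eq_add.mp h
  exact (smul_eq_zero.mp htwo).resolve_left h2

theorem stmt_5 {K A X : Type*} [Field K] (h2 : (2 : K) ≠ 0)
    [Ring A] [Algebra K A] [AddCommGroup X] [Module K X]
    (V : A →ₗ[K] A →ₗ[K] X)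
    (hsymm : ∀ a b : A, V a b = V b a)
    (hsq1 : ∀ a b : A, a ^ 2 = 1 → b ^ 2 = 1 → V a a = V b b)
    (a p : A) (ha : a ^ 2 = 0) (hp : p * p = p)
    (hpa : p * a = a) (hap : a * p = 0) :
    V a a = 0 :=
  stmt_5_general h2 V hsq1 a p ha hp hpa hap
end

section
/- There is no linear map T : M₃(ℂ) → ℂ such that tr(a)·tr(b) = T(ab + ba) for all a, b ∈ M₃(ℂ). Consequently the symmetric bilinear map V(a,b) = tr(a)tr(b) has the square-zero property (V(a,a)=0 when a²=0) but is not of the form T(a∘b). -/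
/-!
A square-zero matrix is nilpotent, so its trace is nilpotent, hence zero over a reduced ring.

Conversely, if `tr a * tr b = T (a * b + b * a)`, then `a = 1` gives `2 * T c = card n * tr c`.
For `i ≠ j` the matrix units satisfy `E i j * E j i + E j i * E i j = E i i + E j j`, so this
identity at `c = E i i + E j j` reads `2 * tr (E i j) * tr (E j i) = 2 * card n`, while the
left-hand side vanishes: impossible in characteristic zero.
-/

namespace Matrix

variable {n R : Type*} [Fintype n] [DecidableEq n] [CommRing R]

theorem trace_eq_zero_of_mul_self_eq_zero [IsReduced R] {a : Matrix n n R} (ha : a * a = 0) :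
    a.trace = 0 :=
  (isNilpotent_trace_of_isNilpotent ⟨2, by rw [pow_two, ha]⟩).eq_zero

theorem two_mul_apply_eq_card_mul_trace {T : Matrix n n R →ₗ[R] R}
    (hT : ∀ a b : Matrix n n R, a.trace * b.trace = T (a * b + b * a)) (c : Matrix n n R) :
    2 * T c = Fintype.card n * c.trace := by
  have h := hT 1 c
  rw [trace_one, one_mul, mul_one, map_add] at h
  rw [h, two_mul]

theorem not_exists_linearMap_trace_mul_trace_eq [Nontrivial n] [NoZeroDivisors R] [CharZero R] :
    ¬ ∃ T : Matrix n n R →ₗ[R] R,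
      ∀ a b : Matrix n n R, a.trace * b.trace = T (a * b + b * a) := by
  rintro ⟨T, hT⟩
  obtain ⟨i, j, hij⟩ := exists_pair_ne n
  have hsum : single i j (1 : R) * single j i 1 + single j i 1 * single i j 1
      = single i i 1 + single j j 1 := by
    rw [single_mul_single_same, single_mul_single_same, one_mul]
  have htrace := two_mul_apply_eq_card_mul_trace hT (single i i 1 + single j j 1)
  rw [← hsum, ← hT, trace_single_eq_of_ne i j 1 hij, zero_mul, mul_zero, hsum, trace_add,
    trace_single_eq_same, trace_single_eq_same] at htrace
  have hne : (2 * Fintype.card n : R) ≠ 0 := mul_ne_zero two_ne_zero (by simp)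
  exact hne (by linear_combination -htrace)

end Matrix

theorem stmt_7 :
    (∀ a : Matrix (Fin 3) (Fin 3) ℂ, a * a = 0 → a.trace * a.trace = 0) ∧
    ¬ ∃ T : Matrix (Fin 3) (Fin 3) ℂ →ₗ[ℂ] ℂ,
        ∀ a b : Matrix (Fin 3) (Fin 3) ℂ,
          a.trace * b.trace = T (a * b + b * a) :=
  ⟨fun _ ha => by rw [Matrix.trace_eq_zero_of_mul_self_eq_zero ha, zero_mul],
    Matrix.not_exists_linearMap_trace_mul_trace_eq⟩
end
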